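/- For all m ≥ 0, the pair (x_{m+1} λ, x_m λ) satisfies: there is exactly one simple reflection r_i with r_i · (x_{m+1} λ) = x_m λ, namely i = 2 if m+1 is even and i = 1 if m+1 is odd, and ⟨x_{m+1}λ, α_i^∨⟩ = −p_{m+1}. -/
import Mathlib


def pseq (a b : ℤ) : ℕ → ℤ
  | 0 => 1
  | 1 => 1
  | m + 2 => (if m % 2 = 0 then b else a) * pseq a b (m + 1) - pseq a b m

def qseq (a b : ℤ) : ℕ → ℤ
  | 0 => 1
  | 1 => 1
  | m + 2 => (if m % 2 = 0 then a else b) * qseq a b (m + 1) - qseq a b m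

/-- Simple reflection r₁ on the weight lattice, in the basis (Λ₁, Λ₂). -/
def r1 (b : ℤ) (w : ℤ × ℤ) : ℤ × ℤ := (-w.1, b * w.1 + w.2)

/-- Simple reflection r₂ on the weight lattice, in the basis (Λ₁, Λ₂). -/
def r2 (a : ℤ) (w : ℤ × ℤ) : ℤ × ℤ := (w.1 + a * w.2, -w.2)

/-- `xl a b m = x_m · λ` where `x_{2k} = (r₂r₁)^k`, `x_{2k+1} = r₁(r₂r₁)^k`, `λ = Λ₁ - Λ₂`. -/
def xl (a b : ℤ) : ℕ → ℤ × ℤ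
  | 0 => (1, -1)
  | m + 1 => if m % 2 = 0 then r1 b (xl a b m) else r2 a (xl a b m)

/-- `yl a b m = y_m · λ` where `y_{2k} = (r₁r₂)^k`, `y_{2k+1} = r₂(r₁r₂)^k`, `λ = Λ₁ - Λ₂`. -/
def yl (a b : ℤ) : ℕ → ℤ × ℤ
  | 0 => (1, -1)
  | m + 1 => if m % 2 = 0 then r2 a (yl a b m) else r1 b (yl a b m)

/-- `xInv a b m` is the inverse `x_m⁻¹` as a map on the weight lattice. -/
def xInv (a b : ℤ) : ℕ → ℤ × ℤ → ℤ × ℤ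
  | 0 => id
  | m + 1 => (xInv a b m) ∘ (if m % 2 = 0 then r1 b else r2 a)

/-- `yInv a b m` is the inverse `y_m⁻¹` as a map on the weight lattice. -/
def yInv (a b : ℤ) : ℕ → ℤ × ℤ → ℤ × ℤ
  | 0 => id
  | m + 1 => (yInv a b m) ∘ (if m % 2 = 0 then r2 a else r1 b)

lemma r1_invol (b : ℤ) (w : ℤ × ℤ) : r1 b (r1 b w) = w := by
  simp [r1, Prod.ext_iff]

lemma r2_invol (a : ℤ) (w : ℤ × ℤ) : r2 a (r2 a w) = w := by
  simp [r2, Prod.ext_iff]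

lemma pseq_pos (a b : ℤ) (ha : 2 ≤ a) (hb : 2 ≤ b) :
    ∀ m, 0 < pseq a b m ∧ pseq a b m ≤ pseq a b (m + 1) := by
  intro m
  induction m with
  | zero => simp [pseq]
  | succ n ih =>
    obtain ⟨h1, h2⟩ := ih
    refine ⟨lt_of_lt_of_le h1 h2, ?_⟩
    show pseq a b (n + 1) ≤ pseq a b (n + 2)
    rw [pseq]
    rcases Nat.mod_two_eq_zero_or_one n with h | h
    · rw [if_pos h]; nlinarith
    · rw [if_neg (by omega)]; nlinarith

lemma xl_eq (a b : ℤ) : ∀ m, xl a b m =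
    if m % 2 = 0 then (pseq a b (m + 1), -pseq a b m)
    else (-pseq a b m, pseq a b (m + 1)) := by
  intro m
  induction m with
  | zero => simp [xl, pseq]
  | succ n ih =>
    rcases Nat.mod_two_eq_zero_or_one n with hn | hn
    · have hn1 : ¬ (n + 1) % 2 = 0 := by omega
      have h2 : pseq a b (n + 2) = b * pseq a b (n + 1) - pseq a b n := by
        rw [pseq, if_pos hn]
      rw [xl, if_pos hn, ih, if_pos hn, if_neg hn1, h2]
      show ((-(pseq a b (n + 1)), b * pseq a b (n + 1) + -pseq a b n) : ℤ × ℤ) = _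
      rw [Prod.mk.injEq]
      exact ⟨rfl, by ring⟩
    · have hn' : ¬ n % 2 = 0 := by omega
      have hn1 : (n + 1) % 2 = 0 := by omega
      have h2 : pseq a b (n + 2) = a * pseq a b (n + 1) - pseq a b n := by
        rw [pseq, if_neg hn']
      rw [xl, if_neg hn', ih, if_neg hn', if_pos hn1, h2]
      show ((-pseq a b n + a * pseq a b (n + 1), -(pseq a b (n + 1))) : ℤ × ℤ) = _
      rw [Prod.mk.injEq]
      exact ⟨by ring, rfl⟩

lemma r1_ne_r2 (a b : ℤ) (hab : 4 < a * b) (w : ℤ × ℤ) (hw : w.1 ≠ 0) :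
    r1 b w ≠ r2 a w := by
  intro h
  simp only [r1, r2, Prod.mk.injEq] at h
  obtain ⟨h1, h2⟩ := h
  have key : (4 - a * b) * w.1 = 0 := by linear_combination (-2 : ℤ) * h1 - a * h2
  rcases mul_eq_zero.mp key with h | h
  · omega
  · exact hw h

theorem stmt17 (a b : ℤ) (ha : 2 ≤ a) (hb : 2 ≤ b) (hab : 4 < a * b) :
    ∀ m : ℕ,
      (Even (m + 1) → r2 a (xl a b (m + 1)) = xl a b m ∧
        r1 b (xl a b (m + 1)) ≠ xl a b m ∧
        (xl a b (m + 1)).2 = -pseq a b (m + 1)) ∧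
      (Odd (m + 1) → r1 b (xl a b (m + 1)) = xl a b m ∧
        r2 a (xl a b (m + 1)) ≠ xl a b m ∧
        (xl a b (m + 1)).1 = -pseq a b (m + 1)) := by
  intro m
  have hpos := pseq_pos a b ha hb
  constructor
  · intro hev
    have hm : m % 2 = 1 := by
      rcases Nat.even_iff.mp hev with h; omega
    have hstep : xl a b (m + 1) = r2 a (xl a b m) := by
      rw [xl, if_neg (by omega : ¬ m % 2 = 0)]
    have hr2 : r2 a (xl a b (m + 1)) = xl a b m := by rw [hstep, r2_invol]
    have hx : xl a b (m + 1) = (pseq a b (m + 2), -pseq a b (m + 1)) := by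
      rw [xl_eq, if_pos (by omega : (m + 1) % 2 = 0)]
    refine ⟨hr2, ?_, by rw [hx]⟩
    have hne : r1 b (xl a b (m + 1)) ≠ r2 a (xl a b (m + 1)) := by
      apply r1_ne_r2 a b hab
      rw [hx]
      exact ne_of_gt (hpos (m + 2)).1
    rw [hr2] at hne
    exact hne
  · intro hodd
    have hm : m % 2 = 0 := by
      have := Nat.odd_iff.mp hodd; omega
    have hstep : xl a b (m + 1) = r1 b (xl a b m) := by
      rw [xl, if_pos hm]
    have hr1 : r1 b (xl a b (m + 1)) = xl a b m := by rw [hstep, r1_invol]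
    have hx : xl a b (m + 1) = (-pseq a b (m + 1), pseq a b (m + 2)) := by
      rw [xl_eq, if_neg (by omega : ¬ (m + 1) % 2 = 0)]
    refine ⟨hr1, ?_, by rw [hx]⟩
    have hne : r1 b (xl a b (m + 1)) ≠ r2 a (xl a b (m + 1)) := by
      apply r1_ne_r2 a b hab
      rw [hx]
      simp only
      exact ne_of_lt (neg_neg_iff_pos.mpr (hpos (m + 1)).1)
    rw [hr1] at hne
    exact (Ne.symm hne)
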